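/- Divergence of the boundary directional derivative: for every integer d ≥ 1 and every probability vector p ∈ ℝ^d, the sequence D ↦ D · ∫⁻_{t∈(0,1)} ENNReal.ofReal( t^{D−1}·(−log(1−t))/p'(t)² ) tends to ∞ as D → ∞. (In particular, it eventually exceeds any fixed value such as f(p^{⋆,d}).) -/

import Mathlib

open MeasureTheory Real

/-- `p'(t) = ∑_{i=1}^d i·p_i·t^{i-1}`, where the probability vector `p : Fin d → ℝ`
has `p i` corresponding to degree `i + 1`. -/
noncomputable def pderiv {d : ℕ} (p : Fin d → ℝ) (t : ℝ) : ℝ :=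
  ∑ i : Fin d, ((i : ℕ) + 1 : ℝ) * p i * t ^ (i : ℕ)

lemma pderiv_pos {d : ℕ} (p : Fin d → ℝ) (hp0 : ∀ i, 0 ≤ p i) (hp1 : ∑ i, p i = 1)
    {t : ℝ} (ht0 : 0 < t) : 0 < pderiv p t := by
  obtain ⟨j, hj⟩ : ∃ j, 0 < p j := by
    by_contra h
    push_neg at h
    have : ∑ i, p i = 0 := Finset.sum_eq_zero fun i _ => le_antisymm (h i) (hp0 i)
    rw [this] at hp1; norm_num at hp1
  apply Finset.sum_pos' (fun i _ => by have := hp0 i; positivity)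
  exact ⟨j, Finset.mem_univ j, by have := hj; positivity⟩

lemma pderiv_le {d : ℕ} (p : Fin d → ℝ) (hp0 : ∀ i, 0 ≤ p i) (hp1 : ∑ i, p i = 1)
    {t : ℝ} (ht0 : 0 ≤ t) (ht1 : t ≤ 1) : pderiv p t ≤ d := by
  have key : pderiv p t ≤ ∑ i : Fin d, (d : ℝ) * p i := by
    apply Finset.sum_le_sum
    intro i _
    have h1 : ((i : ℕ) + 1 : ℝ) ≤ d := by exact_mod_cast i.2
    have h2 : t ^ (i : ℕ) ≤ 1 := pow_le_one₀ ht0 ht1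
    have h3 : (0:ℝ) ≤ t ^ (i : ℕ) := pow_nonneg ht0 _
    have h4 : (0:ℝ) ≤ ((i : ℕ) + 1 : ℝ) * p i := by have := hp0 i; positivity
    calc ((i : ℕ) + 1 : ℝ) * p i * t ^ (i : ℕ) ≤ ((i : ℕ) + 1 : ℝ) * p i * 1 :=
          mul_le_mul_of_nonneg_left h2 h4
      _ = ((i : ℕ) + 1 : ℝ) * p i := mul_one _
      _ ≤ (d : ℝ) * p i := mul_le_mul_of_nonneg_right h1 (hp0 i)
  rwa [← Finset.mul_sum, hp1, mul_one] at key

lemma pderiv_continuous {d : ℕ} (p : Fin d → ℝ) : Continuous (pderiv p) := by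
  unfold pderiv
  exact continuous_finset_sum _ fun i _ => (continuous_const.mul (continuous_pow _))

theorem stmt_13 (d : ℕ) (hd : 1 ≤ d) (p : Fin d → ℝ)
    (hp0 : ∀ i, 0 ≤ p i) (hp1 : ∑ i, p i = 1) :
    Filter.Tendsto
      (fun D : ℕ => (D : ENNReal) *
        ∫⁻ t in Set.Ioo (0 : ℝ) 1,
          ENNReal.ofReal (t ^ (D - 1) * (-Real.log (1 - t)) / (pderiv p t) ^ 2))
      Filter.atTop (nhds ⊤) := by
  rw [ENNReal.tendsto_nhds_top_iff_nnreal]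
  intro x
  set M : ℝ := 2 * d ^ 2 * (x + 1) with hM
  have hd0 : (0:ℝ) < d := by exact_mod_cast hd
  have hM0 : 0 < M := by positivity
  set a : ℝ := 1 - Real.exp (-M) with ha
  have hexp1 : Real.exp (-M) < 1 := Real.exp_lt_one_iff.mpr (by linarith)
  have hexp0 : 0 < Real.exp (-M) := Real.exp_pos _
  have ha0 : 0 < a := by simp only [ha, sub_pos]; linarith
  have ha1 : a < 1 := by simp only [ha]; linarith
  have htend : Filter.Tendsto (fun D : ℕ => a ^ D) Filter.atTop (nhds 0) :=
    tendsto_pow_atTop_nhds_zero_of_lt_one ha0.le ha1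
  have hev : ∀ᶠ D : ℕ in Filter.atTop, a ^ D ≤ 1 / 2 :=
    htend.eventually_le_const (by norm_num : (0:ℝ) < 1/2)
  filter_upwards [hev, Filter.eventually_ge_atTop 1] with D haD hD1
  have hDR : (0:ℝ) < D := by exact_mod_cast hD1
  -- pointwise lower bound on Ioo a 1
  have hpt : ∀ t ∈ Set.Ioo a (1:ℝ),
      ENNReal.ofReal (t ^ (D - 1) * M / d ^ 2) ≤
      ENNReal.ofReal (t ^ (D - 1) * (-Real.log (1 - t)) / (pderiv p t) ^ 2) := by
    intro t ht
    have ht0 : 0 < t := ha0.trans ht.1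
    have ht1 : t < 1 := ht.2
    have h1t : 0 < 1 - t := by linarith
    have hlog : M ≤ -Real.log (1 - t) := by
      have h2 : 1 - t < Real.exp (-M) := by
        have := ht.1; simp only [ha] at this; linarith
      have := Real.log_lt_log h1t h2
      rw [Real.log_exp] at this
      linarith
    have hppos : 0 < pderiv p t := pderiv_pos p hp0 hp1 ht0
    have hple : pderiv p t ≤ d := pderiv_le p hp0 hp1 ht0.le ht1.le
    apply ENNReal.ofReal_le_ofReal
    apply div_le_div₀ (mul_nonneg (pow_nonneg ht0.le _) (hM0.le.trans hlog))
    · exact mul_le_mul_of_nonneg_left hlog (by positivity)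
    · positivity
    · exact pow_le_pow_left₀ hppos.le hple 2
  -- measurability of the big integrand
  have hmeas : Measurable fun t : ℝ =>
      ENNReal.ofReal (t ^ (D - 1) * (-Real.log (1 - t)) / (pderiv p t) ^ 2) := by
    apply ENNReal.measurable_ofReal.comp
    apply Measurable.div
    · exact ((measurable_id.pow_const _).mul
        ((Real.measurable_log.comp (measurable_const.sub measurable_id)).neg))
    · exact ((pderiv_continuous p).measurable.pow_const 2)
  -- value of the lower integral
  have hint : IntegrableOn (fun t : ℝ => t ^ (D - 1) * M / d ^ 2) (Set.Ioo a 1) := by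
    have hc : Continuous fun t : ℝ => t ^ (D - 1) * M / d ^ 2 := by continuity
    exact (hc.integrableOn_Icc (a := a) (b := 1)).mono_set Set.Ioo_subset_Icc_self
  have hval : ∫⁻ t in Set.Ioo a (1:ℝ), ENNReal.ofReal (t ^ (D - 1) * M / d ^ 2) =
      ENNReal.ofReal ((1 - a ^ D) / D * M / d ^ 2) := by
    have hnn : 0 ≤ᵐ[volume.restrict (Set.Ioo a 1)] fun t : ℝ => t ^ (D - 1) * M / d ^ 2 :=
      (ae_restrict_iff' measurableSet_Ioo).mpr (ae_of_all _ fun t ht => by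
        have h0t : (0:ℝ) ≤ t := (ha0.trans ht.1).le
        positivity)
    rw [← ofReal_integral_eq_lintegral_ofReal hint hnn]
    · congr 1
      rw [← MeasureTheory.integral_Ioc_eq_integral_Ioo,
        ← intervalIntegral.integral_of_le ha1.le]
      have : ∫ t in a..(1:ℝ), t ^ (D - 1) * M / d ^ 2
          = (∫ t in a..(1:ℝ), t ^ (D - 1)) * M / d ^ 2 := by
        rw [intervalIntegral.integral_div, intervalIntegral.integral_mul_const]
      rw [this, integral_pow]
      have hD' : D - 1 + 1 = D := Nat.succ_pred_eq_of_pos hD1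
      rw [hD', one_pow]
      have hc : ((D - 1 : ℕ) : ℝ) + 1 = D := by
        rw [Nat.cast_sub hD1]; push_cast; ring
      rw [hc]
  -- put everything together
  have key : ENNReal.ofReal ((1 - a ^ D) / D * M / d ^ 2) ≤
      ∫⁻ t in Set.Ioo (0 : ℝ) 1,
        ENNReal.ofReal (t ^ (D - 1) * (-Real.log (1 - t)) / (pderiv p t) ^ 2) := by
    rw [← hval]
    calc ∫⁻ t in Set.Ioo a (1:ℝ), ENNReal.ofReal (t ^ (D - 1) * M / d ^ 2)
        ≤ ∫⁻ t in Set.Ioo a (1:ℝ),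
            ENNReal.ofReal (t ^ (D - 1) * (-Real.log (1 - t)) / (pderiv p t) ^ 2) :=
          setLIntegral_mono hmeas hpt
      _ ≤ _ := lintegral_mono_set (Set.Ioo_subset_Ioo ha0.le le_rfl)
  have hlb : ENNReal.ofReal (M / (2 * d ^ 2)) ≤ (D : ENNReal) *
      ∫⁻ t in Set.Ioo (0 : ℝ) 1,
        ENNReal.ofReal (t ^ (D - 1) * (-Real.log (1 - t)) / (pderiv p t) ^ 2) := by
    calc ENNReal.ofReal (M / (2 * d ^ 2))
        ≤ (D : ENNReal) * ENNReal.ofReal ((1 - a ^ D) / D * M / d ^ 2) := by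
          rw [← ENNReal.ofReal_natCast D, ← ENNReal.ofReal_mul (by positivity)]
          apply ENNReal.ofReal_le_ofReal
          have h2 : (1:ℝ)/2 ≤ 1 - a ^ D := by linarith
          have : (D:ℝ) * ((1 - a ^ D) / D * M / d ^ 2) = (1 - a ^ D) * M / d ^ 2 := by
            field_simp
          rw [this]
          calc M / (2 * d ^ 2) = (1/2) * M / d ^ 2 := by ring
            _ ≤ (1 - a ^ D) * M / d ^ 2 := by gcongr
      _ ≤ _ := mul_le_mul_right key _
  refine lt_of_lt_of_le ?_ hlb
  have heq : M / (2 * d ^ 2) = (x : ℝ) + 1 := by field_simp [hM]; exact hM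
  rw [heq]
  rw [ENNReal.lt_ofReal_iff_toReal_lt (by simp)]
  simp
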